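/- (Second-order bound on the von Mises remainder of the ATE functional.) Let B ≥ 0 be such that |Ψ̄| ≤ B a.s., and define R_ξ := E_P[ (1/δ̄)·( (π̄₁−π₁)·( (μ̄₁−μ₁−Ψ̄·(λ̄₁−λ₁))/π̄₁ + (μ̄₀−μ₀−Ψ̄·(λ̄₀−λ₀))/(1−π̄₁) ) + (δ̄−δ)·(Ψ̄−Ψ) ) ]. Then |R_ξ| ≤ ε⁻²·‖π̄₁−π₁‖·( ‖μ̄₁−μ₁‖ + ‖μ̄₀−μ₀‖ + B·‖λ̄₁−λ₁‖ + B·‖λ̄₀−λ₀‖ ) + ε⁻¹·‖δ̄−δ‖·‖Ψ̄−Ψ‖, where ‖f‖ := (E_P[f²])^{1/2} is the L²(P) norm. -/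

import Mathlib

open MeasureTheory


/-- Conditional expectation of an L² function is in L². -/
lemma aux_memLp2_condexp {Ω : Type*} {𝔛 ℱ : MeasurableSpace Ω} {P : Measure Ω}
    [IsProbabilityMeasure P] (h𝔛 : 𝔛 ≤ ℱ) {f : Ω → ℝ}
    (hf : MemLp f 2 P) : MemLp (P[f|𝔛]) 2 P := by
  set F : Lp ℝ 2 P := hf.toLp f with hF
  refine (Lp.memLp ((condExpL2 ℝ ℝ h𝔛 F : lpMeas ℝ ℝ 𝔛 2 P) : Lp ℝ 2 P)).ae_eq ?_
  refine ae_eq_condExp_of_forall_setIntegral_eq h𝔛 (hf.integrable one_le_two)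
    (fun s _ _ => ((Lp.memLp _).integrable one_le_two).integrableOn)
    (fun s hs hμs => ?_) (aestronglyMeasurable_condExpL2 h𝔛 F)
  rw [integral_condExpL2_eq (𝕜 := ℝ) h𝔛 F hs hμs.ne]
  exact setIntegral_congr_ae (h𝔛 s hs) ((hf.coeFn_toLp).mono fun x hx _ => hx)

/-- Product of two L² functions is integrable. -/
lemma aux_int_mul {Ω : Type*} {ℱ : MeasurableSpace Ω} {P : Measure Ω}
    {u v : Ω → ℝ} (hu : MemLp u 2 P) (hv : MemLp v 2 P) :
    Integrable (fun ω => u ω * v ω) P := by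
  refine Integrable.mono ((hu.integrable_sq.add hv.integrable_sq).div_const 2)
    (hu.1.mul hv.1) (Filter.Eventually.of_forall fun ω => ?_)
  simp only [Real.norm_eq_abs, Pi.add_apply]
  have h2 : |(u ω ^ 2 + v ω ^ 2) / 2| = (u ω ^ 2 + v ω ^ 2) / 2 :=
    abs_of_nonneg (by positivity)
  rw [h2, abs_mul]
  nlinarith [sq_nonneg (|u ω| - |v ω|), sq_abs (u ω), sq_abs (v ω),
    abs_nonneg (u ω), abs_nonneg (v ω)]

/-- Cauchy–Schwarz. -/
lemma aux_cauchy {Ω : Type*} {ℱ : MeasurableSpace Ω} {P : Measure Ω}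
    {u v : Ω → ℝ} (hu : MemLp u 2 P) (hv : MemLp v 2 P) :
    ∫ ω, |u ω * v ω| ∂P ≤
      Real.sqrt (∫ ω, u ω ^ 2 ∂P) * Real.sqrt (∫ ω, v ω ^ 2 ∂P) := by
  have hpq : (2:ℝ).HolderConjugate 2 := Real.HolderConjugate.two_two
  have h2 : ENNReal.ofReal (2:ℝ) = 2 := by rw [ENNReal.ofReal_ofNat]
  have h := integral_mul_norm_le_Lp_mul_Lq hpq (h2 ▸ hu) (h2 ▸ hv)
  simp only [Real.norm_eq_abs] at h
  calc ∫ ω, |u ω * v ω| ∂P = ∫ ω, |u ω| * |v ω| ∂P := by simp [abs_mul]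
    _ ≤ (∫ ω, |u ω| ^ (2:ℝ) ∂P) ^ (1/2 : ℝ) * (∫ ω, |v ω| ^ (2:ℝ) ∂P) ^ (1/2 : ℝ) := h
    _ = Real.sqrt (∫ ω, u ω ^ 2 ∂P) * Real.sqrt (∫ ω, v ω ^ 2 ∂P) := by
        rw [Real.sqrt_eq_rpow, Real.sqrt_eq_rpow]
        congr 2 <;> exact integral_congr_ae (Filter.Eventually.of_forall fun ω => by
          simp [Real.rpow_two, sq_abs])

/-- Pointwise bound. -/
lemma aux_ptwise (ε B δb πb f g₁ g₀ h₁ h₀ d Ψb Ψ : ℝ) (hε : 0 < ε)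
    (h1 : ε ≤ |δb|) (h2 : ε ≤ πb) (h3 : πb ≤ 1 - ε) (hB : |Ψb| ≤ B) :
    |1 / δb * (f * ((g₁ - Ψb * h₁) / πb + (g₀ - Ψb * h₀) / (1 - πb)) + d * (Ψb - Ψ))| ≤
      (ε ^ 2)⁻¹ * (|f * g₁| + |f * g₀| + B * |f * h₁| + B * |f * h₀|) + ε⁻¹ * |d * (Ψb - Ψ)| := by
  have hπ : 0 < πb := lt_of_lt_of_le hε h2
  have hπ' : 0 < 1 - πb := by linarith
  have hBnn : 0 ≤ B := le_trans (abs_nonneg _) hB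
  have hδ : |1 / δb| ≤ ε⁻¹ := by
    rw [abs_div, abs_one]
    exact le_of_le_of_eq (one_div_le_one_div_of_le hε h1) (one_div ε)
  have hT₁ : |(g₁ - Ψb * h₁) / πb| ≤ ε⁻¹ * (|g₁| + B * |h₁|) := by
    rw [abs_div, abs_of_pos hπ, div_le_iff₀ hπ]
    have e1 : |g₁ - Ψb * h₁| ≤ |g₁| + B * |h₁| := by
      calc |g₁ - Ψb * h₁| ≤ |g₁| + |Ψb * h₁| := abs_sub _ _
        _ ≤ |g₁| + B * |h₁| := by rw [abs_mul]; nlinarith [abs_nonneg h₁]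
    calc |g₁ - Ψb * h₁| ≤ |g₁| + B * |h₁| := e1
      _ = ε⁻¹ * (|g₁| + B * |h₁|) * ε := by field_simp
      _ ≤ ε⁻¹ * (|g₁| + B * |h₁|) * πb := by
          have h0 : 0 ≤ ε⁻¹ * (|g₁| + B * |h₁|) := by positivity
          nlinarith
  have hT₀ : |(g₀ - Ψb * h₀) / (1 - πb)| ≤ ε⁻¹ * (|g₀| + B * |h₀|) := by
    rw [abs_div, abs_of_pos hπ', div_le_iff₀ hπ']
    have e1 : |g₀ - Ψb * h₀| ≤ |g₀| + B * |h₀| := by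
      calc |g₀ - Ψb * h₀| ≤ |g₀| + |Ψb * h₀| := abs_sub _ _
        _ ≤ |g₀| + B * |h₀| := by rw [abs_mul]; nlinarith [abs_nonneg h₀]
    calc |g₀ - Ψb * h₀| ≤ |g₀| + B * |h₀| := e1
      _ = ε⁻¹ * (|g₀| + B * |h₀|) * ε := by field_simp
      _ ≤ ε⁻¹ * (|g₀| + B * |h₀|) * (1 - πb) := by
          have h0 : 0 ≤ ε⁻¹ * (|g₀| + B * |h₀|) := by positivity
          nlinarith
  calc |1 / δb * (f * ((g₁ - Ψb * h₁) / πb + (g₀ - Ψb * h₀) / (1 - πb)) + d * (Ψb - Ψ))|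
      = |1 / δb| * |f * ((g₁ - Ψb * h₁) / πb + (g₀ - Ψb * h₀) / (1 - πb)) + d * (Ψb - Ψ)| :=
        abs_mul _ _
    _ ≤ ε⁻¹ * (|f| * (|(g₁ - Ψb * h₁) / πb| + |(g₀ - Ψb * h₀) / (1 - πb)|) + |d * (Ψb - Ψ)|) := by
        refine mul_le_mul hδ ?_ (abs_nonneg _) (by positivity)
        calc |f * ((g₁ - Ψb * h₁) / πb + (g₀ - Ψb * h₀) / (1 - πb)) + d * (Ψb - Ψ)|
            ≤ |f * ((g₁ - Ψb * h₁) / πb + (g₀ - Ψb * h₀) / (1 - πb))| + |d * (Ψb - Ψ)| :=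
              abs_add_le _ _
          _ ≤ |f| * (|(g₁ - Ψb * h₁) / πb| + |(g₀ - Ψb * h₀) / (1 - πb)|) + |d * (Ψb - Ψ)| := by
              rw [abs_mul]
              gcongr
              exact abs_add_le _ _
    _ ≤ ε⁻¹ * (|f| * (ε⁻¹ * (|g₁| + B * |h₁|) + ε⁻¹ * (|g₀| + B * |h₀|)) + |d * (Ψb - Ψ)|) := by
        gcongr
    _ = (ε ^ 2)⁻¹ * (|f * g₁| + |f * g₀| + B * |f * h₁| + B * |f * h₀|) + ε⁻¹ * |d * (Ψb - Ψ)| := by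
        simp only [abs_mul]
        field_simp
        ring

/-- Second-order bound on the von Mises remainder of the ATE functional:
if |Ψ̄| ≤ B a.s. with B ≥ 0, then the remainder
R_ξ := E_P[(1/δ̄)·((π̄₁−π₁)·((μ̄₁−μ₁−Ψ̄·(λ̄₁−λ₁))/π̄₁ + (μ̄₀−μ₀−Ψ̄·(λ̄₀−λ₀))/(1−π̄₁))
       + (δ̄−δ)·(Ψ̄−Ψ))]
satisfies |R_ξ| ≤ ε⁻²·‖π̄₁−π₁‖·(‖μ̄₁−μ₁‖ + ‖μ̄₀−μ₀‖ + B·‖λ̄₁−λ₁‖ + B·‖λ̄₀−λ₀‖)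
  + ε⁻¹·‖δ̄−δ‖·‖Ψ̄−Ψ‖, where ‖f‖ := (E_P[f²])^{1/2} is the L²(P) norm. -/
theorem statement19
    {Ω : Type*} (𝔛 : MeasurableSpace Ω) [ℱ : MeasurableSpace Ω] (P : Measure Ω) [IsProbabilityMeasure P]
    (h𝔛 : 𝔛 ≤ ℱ)
    (Z A Y : Ω → ℝ) (hZm : Measurable Z) (hAm : Measurable A) (hYL2 : MemLp Y 2 P)
    (hZ01 : ∀ᵐ ω ∂P, Z ω = 0 ∨ Z ω = 1) (hA01 : ∀ᵐ ω ∂P, A ω = 0 ∨ A ω = 1)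
    (π₁ : Ω → ℝ) (hπ₁ : π₁ = P[Z|𝔛])
    (μ₁ μ₀ lam₁ lam₀ : Ω → ℝ)
    (hμ₁m : Measurable[𝔛] μ₁) (hμ₀m : Measurable[𝔛] μ₀)
    (hlam₁m : Measurable[𝔛] lam₁) (hlam₀m : Measurable[𝔛] lam₀)
    (hμ₁ : μ₁ * π₁ =ᵐ[P] P[Y * Z|𝔛]) (hμ₀ : μ₀ * (1 - π₁) =ᵐ[P] P[Y * (1 - Z)|𝔛])
    (hlam₁ : lam₁ * π₁ =ᵐ[P] P[A * Z|𝔛]) (hlam₀ : lam₀ * (1 - π₁) =ᵐ[P] P[A * (1 - Z)|𝔛])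
    (ε : ℝ) (hε : 0 < ε)
    (hπbd : ∀ᵐ ω ∂P, ε ≤ π₁ ω ∧ π₁ ω ≤ 1 - ε)
    (hδbd : ∀ᵐ ω ∂P, ε ≤ |lam₁ ω - lam₀ ω|)
    (Ψ : Ω → ℝ) (hΨ : Ψ = (μ₁ - μ₀) / (lam₁ - lam₀))
    (πb₁ μb₀ μb₁ lamb₀ lamb₁ : Ω → ℝ)
    (hπb₁m : Measurable[𝔛] πb₁) (hμb₀m : Measurable[𝔛] μb₀) (hμb₁m : Measurable[𝔛] μb₁)
    (hlamb₀m : Measurable[𝔛] lamb₀) (hlamb₁m : Measurable[𝔛] lamb₁)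
    (hμb₀bd : ∃ C, ∀ ω, |μb₀ ω| ≤ C) (hμb₁bd : ∃ C, ∀ ω, |μb₁ ω| ≤ C)
    (hlamb₀bd : ∃ C, ∀ ω, |lamb₀ ω| ≤ C) (hlamb₁bd : ∃ C, ∀ ω, |lamb₁ ω| ≤ C)
    (hπbbd : ∀ᵐ ω ∂P, ε ≤ πb₁ ω ∧ πb₁ ω ≤ 1 - ε)
    (hδbbd : ∀ᵐ ω ∂P, ε ≤ |lamb₁ ω - lamb₀ ω|)
    (Ψb : Ω → ℝ) (hΨb : Ψb = (μb₁ - μb₀) / (lamb₁ - lamb₀))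
    (B : ℝ) (hB : 0 ≤ B) (hΨbB : ∀ᵐ ω ∂P, |Ψb ω| ≤ B) :
    |∫ ω, (1 / (lamb₁ ω - lamb₀ ω)) *
        ((πb₁ ω - π₁ ω) *
          ((μb₁ ω - μ₁ ω - Ψb ω * (lamb₁ ω - lam₁ ω)) / πb₁ ω +
           (μb₀ ω - μ₀ ω - Ψb ω * (lamb₀ ω - lam₀ ω)) / (1 - πb₁ ω)) +
         ((lamb₁ ω - lamb₀ ω) - (lam₁ ω - lam₀ ω)) * (Ψb ω - Ψ ω)) ∂P|
      ≤ (ε ^ 2)⁻¹ * Real.sqrt (∫ ω, (πb₁ ω - π₁ ω) ^ 2 ∂P) *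
          (Real.sqrt (∫ ω, (μb₁ ω - μ₁ ω) ^ 2 ∂P) +
           Real.sqrt (∫ ω, (μb₀ ω - μ₀ ω) ^ 2 ∂P) +
           B * Real.sqrt (∫ ω, (lamb₁ ω - lam₁ ω) ^ 2 ∂P) +
           B * Real.sqrt (∫ ω, (lamb₀ ω - lam₀ ω) ^ 2 ∂P))
        + ε⁻¹ * Real.sqrt (∫ ω, ((lamb₁ ω - lamb₀ ω) - (lam₁ ω - lam₀ ω)) ^ 2 ∂P) *
            Real.sqrt (∫ ω, (Ψb ω - Ψ ω) ^ 2 ∂P) := by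
  -- basic bounds
  have hεinv : (0:ℝ) < ε⁻¹ := inv_pos.mpr hε
  -- measurability conversions
  have mπ₁ : AEStronglyMeasurable[ℱ] π₁ P := by
    rw [hπ₁]; exact (stronglyMeasurable_condExp.mono h𝔛).aestronglyMeasurable
  have mμ₁ : AEStronglyMeasurable[ℱ] μ₁ P := (hμ₁m.mono h𝔛 le_rfl).aestronglyMeasurable
  have mμ₀ : AEStronglyMeasurable[ℱ] μ₀ P := (hμ₀m.mono h𝔛 le_rfl).aestronglyMeasurable
  have mlam₁ : AEStronglyMeasurable[ℱ] lam₁ P := (hlam₁m.mono h𝔛 le_rfl).aestronglyMeasurable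
  have mlam₀ : AEStronglyMeasurable[ℱ] lam₀ P := (hlam₀m.mono h𝔛 le_rfl).aestronglyMeasurable
  have mπb₁ : AEStronglyMeasurable[ℱ] πb₁ P := (hπb₁m.mono h𝔛 le_rfl).aestronglyMeasurable
  have mμb₀ : AEStronglyMeasurable[ℱ] μb₀ P := (hμb₀m.mono h𝔛 le_rfl).aestronglyMeasurable
  have mμb₁ : AEStronglyMeasurable[ℱ] μb₁ P := (hμb₁m.mono h𝔛 le_rfl).aestronglyMeasurable
  have mlamb₀ : AEStronglyMeasurable[ℱ] lamb₀ P := (hlamb₀m.mono h𝔛 le_rfl).aestronglyMeasurable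
  have mlamb₁ : AEStronglyMeasurable[ℱ] lamb₁ P := (hlamb₁m.mono h𝔛 le_rfl).aestronglyMeasurable
  have mΨ : AEStronglyMeasurable[ℱ] Ψ P := by
    rw [hΨ]
    exact ((((hμ₁m.sub hμ₀m).div (hlam₁m.sub hlam₀m)).mono h𝔛 le_rfl)).aestronglyMeasurable
  have mΨb : AEStronglyMeasurable[ℱ] Ψb P := by
    rw [hΨb]
    exact ((((hμb₁m.sub hμb₀m).div (hlamb₁m.sub hlamb₀m)).mono h𝔛 le_rfl)).aestronglyMeasurable
  -- MemLp of the pieces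
  have memπ₁ : MemLp π₁ 2 P := by
    refine MemLp.of_bound mπ₁ 1 ?_
    filter_upwards [hπbd] with ω h
    rw [Real.norm_eq_abs, abs_le]; constructor <;> linarith [h.1, h.2]
  have memπb₁ : MemLp πb₁ 2 P := by
    refine MemLp.of_bound mπb₁ 1 ?_
    filter_upwards [hπbbd] with ω h
    rw [Real.norm_eq_abs, abs_le]; constructor <;> linarith [h.1, h.2]
  obtain ⟨C0, hC0⟩ := hμb₀bd
  obtain ⟨C1, hC1⟩ := hμb₁bd
  obtain ⟨D0, hD0⟩ := hlamb₀bd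
  obtain ⟨D1, hD1⟩ := hlamb₁bd
  have memμb₀ : MemLp μb₀ 2 P :=
    MemLp.of_bound mμb₀ C0 (Filter.Eventually.of_forall fun ω => by
      rw [Real.norm_eq_abs]; exact hC0 ω)
  have memμb₁ : MemLp μb₁ 2 P :=
    MemLp.of_bound mμb₁ C1 (Filter.Eventually.of_forall fun ω => by
      rw [Real.norm_eq_abs]; exact hC1 ω)
  have memlamb₀ : MemLp lamb₀ 2 P :=
    MemLp.of_bound mlamb₀ D0 (Filter.Eventually.of_forall fun ω => by
      rw [Real.norm_eq_abs]; exact hD0 ω)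
  have memlamb₁ : MemLp lamb₁ 2 P :=
    MemLp.of_bound mlamb₁ D1 (Filter.Eventually.of_forall fun ω => by
      rw [Real.norm_eq_abs]; exact hD1 ω)
  have memΨb : MemLp Ψb 2 P := MemLp.of_bound mΨb B (by
    filter_upwards [hΨbB] with ω h; rwa [Real.norm_eq_abs])
  -- lam₁, lam₀ bounded a.e.
  have hAZbd : ∀ᵐ ω ∂P, |(A * Z) ω| ≤ ((1 : NNReal) : ℝ) := by
    filter_upwards [hA01, hZ01] with ω hA hZ
    simp only [Pi.mul_apply, NNReal.coe_one]
    rcases hA with hA | hA <;> rcases hZ with hZ | hZ <;> norm_num [hA, hZ]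
  have hAZ'bd : ∀ᵐ ω ∂P, |(A * (1 - Z)) ω| ≤ ((1 : NNReal) : ℝ) := by
    filter_upwards [hA01, hZ01] with ω hA hZ
    simp only [Pi.mul_apply, Pi.sub_apply, Pi.one_apply, NNReal.coe_one]
    rcases hA with hA | hA <;> rcases hZ with hZ | hZ <;> norm_num [hA, hZ]
  have hCEAZ := ae_bdd_condExp_of_ae_bdd (m := 𝔛) hAZbd
  have hCEAZ' := ae_bdd_condExp_of_ae_bdd (m := 𝔛) hAZ'bd
  have memlam₁ : MemLp lam₁ 2 P := by
    refine MemLp.of_bound mlam₁ ε⁻¹ ?_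
    filter_upwards [hlam₁, hCEAZ, hπbd] with ω h1 h2 h3
    rw [Real.norm_eq_abs, ← one_div, le_div_iff₀ hε]
    have key : |lam₁ ω| * π₁ ω ≤ 1 := by
      have : |lam₁ ω * π₁ ω| ≤ 1 := by
        rw [show lam₁ ω * π₁ ω = (lam₁ * π₁) ω from rfl, h1]
        simpa using h2
      rwa [abs_mul, abs_of_nonneg (by linarith [h3.1] : (0:ℝ) ≤ π₁ ω)] at this
    calc |lam₁ ω| * ε ≤ |lam₁ ω| * π₁ ω := by
          exact mul_le_mul_of_nonneg_left h3.1 (abs_nonneg _)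
      _ ≤ 1 := key
  have memlam₀ : MemLp lam₀ 2 P := by
    refine MemLp.of_bound mlam₀ ε⁻¹ ?_
    filter_upwards [hlam₀, hCEAZ', hπbd] with ω h1 h2 h3
    rw [Real.norm_eq_abs, ← one_div, le_div_iff₀ hε]
    have key : |lam₀ ω| * (1 - π₁ ω) ≤ 1 := by
      have : |lam₀ ω * (1 - π₁ ω)| ≤ 1 := by
        rw [show lam₀ ω * (1 - π₁ ω) = (lam₀ * (1 - π₁)) ω from rfl, h1]
        simpa using h2
      rwa [abs_mul, abs_of_nonneg (by linarith [h3.2] : (0:ℝ) ≤ 1 - π₁ ω)] at this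
    calc |lam₀ ω| * ε ≤ |lam₀ ω| * (1 - π₁ ω) := by
          exact mul_le_mul_of_nonneg_left (by linarith [h3.2]) (abs_nonneg _)
      _ ≤ 1 := key
  -- μ₁, μ₀ in L²
  have memYZ : MemLp (Y * Z) 2 P := by
    refine MemLp.of_le hYL2 (hYL2.1.mul ((hZm.aestronglyMeasurable : AEStronglyMeasurable[ℱ] Z P))) ?_
    filter_upwards [hZ01] with ω hZ
    rcases hZ with hZ | hZ <;> simp [Pi.mul_apply, hZ, abs_nonneg]
  have memYZ' : MemLp (Y * (1 - Z)) 2 P := by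
    refine MemLp.of_le hYL2 (hYL2.1.mul (aestronglyMeasurable_const.sub
      (hZm.aestronglyMeasurable : AEStronglyMeasurable[ℱ] Z P))) ?_
    filter_upwards [hZ01] with ω hZ
    rcases hZ with hZ | hZ <;> simp [Pi.mul_apply, Pi.sub_apply, hZ, abs_nonneg]
  have memCE₁ : MemLp (P[Y * Z|𝔛]) 2 P := aux_memLp2_condexp h𝔛 memYZ
  have memCE₀ : MemLp (P[Y * (1 - Z)|𝔛]) 2 P := aux_memLp2_condexp h𝔛 memYZ'
  have memμ₁ : MemLp μ₁ 2 P := by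
    refine MemLp.of_le (memCE₁.const_mul ε⁻¹) mμ₁ ?_
    filter_upwards [hμ₁, hπbd] with ω h1 h3
    rw [Real.norm_eq_abs, Real.norm_eq_abs, abs_mul, abs_of_pos hεinv,
      inv_mul_eq_div, le_div_iff₀ hε]
    have key : |μ₁ ω| * π₁ ω = |(P[Y * Z|𝔛]) ω| := by
      rw [← abs_of_nonneg (by linarith [h3.1] : (0:ℝ) ≤ π₁ ω), ← abs_mul,
        show μ₁ ω * π₁ ω = (μ₁ * π₁) ω from rfl, h1]
    calc |μ₁ ω| * ε ≤ |μ₁ ω| * π₁ ω := mul_le_mul_of_nonneg_left h3.1 (abs_nonneg _)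
      _ = |(P[Y * Z|𝔛]) ω| := key
  have memμ₀ : MemLp μ₀ 2 P := by
    refine MemLp.of_le (memCE₀.const_mul ε⁻¹) mμ₀ ?_
    filter_upwards [hμ₀, hπbd] with ω h1 h3
    rw [Real.norm_eq_abs, Real.norm_eq_abs, abs_mul, abs_of_pos hεinv,
      inv_mul_eq_div, le_div_iff₀ hε]
    have key : |μ₀ ω| * (1 - π₁ ω) = |(P[Y * (1 - Z)|𝔛]) ω| := by
      rw [← abs_of_nonneg (by linarith [h3.2] : (0:ℝ) ≤ 1 - π₁ ω), ← abs_mul,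
        show μ₀ ω * (1 - π₁ ω) = (μ₀ * (1 - π₁)) ω from rfl, h1]
    calc |μ₀ ω| * ε ≤ |μ₀ ω| * (1 - π₁ ω) :=
          mul_le_mul_of_nonneg_left (by linarith [h3.2]) (abs_nonneg _)
      _ = |(P[Y * (1 - Z)|𝔛]) ω| := key
  -- Ψ in L²
  have memΨ : MemLp Ψ 2 P := by
    refine MemLp.of_le ((memμ₁.sub memμ₀).const_mul ε⁻¹) mΨ ?_
    filter_upwards [hδbd] with ω h1
    rw [hΨ]
    simp only [Pi.div_apply, Pi.sub_apply]
    rw [Real.norm_eq_abs, Real.norm_eq_abs, abs_div, abs_mul, abs_of_pos hεinv]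
    calc |μ₁ ω - μ₀ ω| / |lam₁ ω - lam₀ ω| ≤ |μ₁ ω - μ₀ ω| / ε :=
          div_le_div_of_nonneg_left (abs_nonneg _) hε h1
      _ = ε⁻¹ * |μ₁ ω - μ₀ ω| := by rw [div_eq_inv_mul]
  -- the seven difference functions
  have memf : MemLp (fun ω => πb₁ ω - π₁ ω) 2 P := memπb₁.sub memπ₁
  have memg₁ : MemLp (fun ω => μb₁ ω - μ₁ ω) 2 P := memμb₁.sub memμ₁
  have memg₀ : MemLp (fun ω => μb₀ ω - μ₀ ω) 2 P := memμb₀.sub memμ₀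
  have memh₁ : MemLp (fun ω => lamb₁ ω - lam₁ ω) 2 P := memlamb₁.sub memlam₁
  have memh₀ : MemLp (fun ω => lamb₀ ω - lam₀ ω) 2 P := memlamb₀.sub memlam₀
  have memd : MemLp (fun ω => (lamb₁ ω - lamb₀ ω) - (lam₁ ω - lam₀ ω)) 2 P :=
    (memlamb₁.sub memlamb₀).sub (memlam₁.sub memlam₀)
  have meme : MemLp (fun ω => Ψb ω - Ψ ω) 2 P := memΨb.sub memΨ
  -- integrability of products
  have i1 : Integrable (fun ω => (πb₁ ω - π₁ ω) * (μb₁ ω - μ₁ ω)) P := aux_int_mul memf memg₁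
  have i2 : Integrable (fun ω => (πb₁ ω - π₁ ω) * (μb₀ ω - μ₀ ω)) P := aux_int_mul memf memg₀
  have i3 : Integrable (fun ω => (πb₁ ω - π₁ ω) * (lamb₁ ω - lam₁ ω)) P := aux_int_mul memf memh₁
  have i4 : Integrable (fun ω => (πb₁ ω - π₁ ω) * (lamb₀ ω - lam₀ ω)) P := aux_int_mul memf memh₀
  have i5 : Integrable
      (fun ω => ((lamb₁ ω - lamb₀ ω) - (lam₁ ω - lam₀ ω)) * (Ψb ω - Ψ ω)) P :=
    aux_int_mul memd meme
  have hG : Integrable (fun ω =>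
      (ε ^ 2)⁻¹ * (|(πb₁ ω - π₁ ω) * (μb₁ ω - μ₁ ω)| + |(πb₁ ω - π₁ ω) * (μb₀ ω - μ₀ ω)| +
        B * |(πb₁ ω - π₁ ω) * (lamb₁ ω - lam₁ ω)| + B * |(πb₁ ω - π₁ ω) * (lamb₀ ω - lam₀ ω)|) +
      ε⁻¹ * |((lamb₁ ω - lamb₀ ω) - (lam₁ ω - lam₀ ω)) * (Ψb ω - Ψ ω)|) P :=
    ((((i1.abs.add i2.abs).add (i3.abs.const_mul B)).add (i4.abs.const_mul B)).const_mul
      ((ε ^ 2)⁻¹)).add (i5.abs.const_mul ε⁻¹)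
  -- main chain
  have habs : ∀ x : ℝ, |x| = ‖x‖ := fun x => (Real.norm_eq_abs x).symm
  rw [habs]
  refine le_trans (norm_integral_le_integral_norm _) (le_trans
    (integral_mono_of_nonneg (Filter.Eventually.of_forall fun ω => norm_nonneg _) hG ?_) ?_)
  · filter_upwards [hπbbd, hδbbd, hΨbB] with ω h1 h2 h3
    rw [Real.norm_eq_abs]
    exact aux_ptwise ε B _ _ _ _ _ _ _ _ _ _ hε h2 h1.1 h1.2 h3
  · -- split the integral and apply Cauchy–Schwarz
    have k1 : Integrable (fun ω => |(πb₁ ω - π₁ ω) * (μb₁ ω - μ₁ ω)|) P := i1.abs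
    have k2 : Integrable (fun ω => |(πb₁ ω - π₁ ω) * (μb₀ ω - μ₀ ω)|) P := i2.abs
    have k3 : Integrable (fun ω => B * |(πb₁ ω - π₁ ω) * (lamb₁ ω - lam₁ ω)|) P :=
      i3.abs.const_mul B
    have k4 : Integrable (fun ω => B * |(πb₁ ω - π₁ ω) * (lamb₀ ω - lam₀ ω)|) P :=
      i4.abs.const_mul B
    have j5 : Integrable (fun ω => |(πb₁ ω - π₁ ω) * (μb₁ ω - μ₁ ω)| +
        |(πb₁ ω - π₁ ω) * (μb₀ ω - μ₀ ω)|) P := k1.add k2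
    have j3 : Integrable (fun ω => |(πb₁ ω - π₁ ω) * (μb₁ ω - μ₁ ω)| +
        |(πb₁ ω - π₁ ω) * (μb₀ ω - μ₀ ω)| +
        B * |(πb₁ ω - π₁ ω) * (lamb₁ ω - lam₁ ω)|) P := j5.add k3
    have jS : Integrable (fun ω => |(πb₁ ω - π₁ ω) * (μb₁ ω - μ₁ ω)| +
        |(πb₁ ω - π₁ ω) * (μb₀ ω - μ₀ ω)| +
        B * |(πb₁ ω - π₁ ω) * (lamb₁ ω - lam₁ ω)| +
        B * |(πb₁ ω - π₁ ω) * (lamb₀ ω - lam₀ ω)|) P := j3.add k4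
    have j1 : Integrable (fun ω => (ε ^ 2)⁻¹ * (|(πb₁ ω - π₁ ω) * (μb₁ ω - μ₁ ω)| +
        |(πb₁ ω - π₁ ω) * (μb₀ ω - μ₀ ω)| +
        B * |(πb₁ ω - π₁ ω) * (lamb₁ ω - lam₁ ω)| +
        B * |(πb₁ ω - π₁ ω) * (lamb₀ ω - lam₀ ω)|)) P := jS.const_mul _
    have j2 : Integrable (fun ω =>
        ε⁻¹ * |((lamb₁ ω - lamb₀ ω) - (lam₁ ω - lam₀ ω)) * (Ψb ω - Ψ ω)|) P :=
      i5.abs.const_mul _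
    rw [integral_add j1 j2, integral_const_mul, integral_const_mul,
      integral_add j3 k4, integral_add j5 k3, integral_add k1 k2,
      integral_const_mul, integral_const_mul]
    have c1 := aux_cauchy memf memg₁
    have c2 := aux_cauchy memf memg₀
    have c3 := aux_cauchy memf memh₁
    have c4 := aux_cauchy memf memh₀
    have c5 := aux_cauchy memd meme
    have d3 := mul_le_mul_of_nonneg_left c3 hB
    have d4 := mul_le_mul_of_nonneg_left c4 hB
    rw [mul_assoc, mul_assoc]
    refine add_le_add (mul_le_mul_of_nonneg_left ?_ (by positivity))
      (mul_le_mul_of_nonneg_left c5 (le_of_lt hεinv))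
    have expand : Real.sqrt (∫ ω, (πb₁ ω - π₁ ω) ^ 2 ∂P) *
        (Real.sqrt (∫ ω, (μb₁ ω - μ₁ ω) ^ 2 ∂P) + Real.sqrt (∫ ω, (μb₀ ω - μ₀ ω) ^ 2 ∂P) +
         B * Real.sqrt (∫ ω, (lamb₁ ω - lam₁ ω) ^ 2 ∂P) +
         B * Real.sqrt (∫ ω, (lamb₀ ω - lam₀ ω) ^ 2 ∂P)) =
        Real.sqrt (∫ ω, (πb₁ ω - π₁ ω) ^ 2 ∂P) * Real.sqrt (∫ ω, (μb₁ ω - μ₁ ω) ^ 2 ∂P) +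
        Real.sqrt (∫ ω, (πb₁ ω - π₁ ω) ^ 2 ∂P) * Real.sqrt (∫ ω, (μb₀ ω - μ₀ ω) ^ 2 ∂P) +
        B * (Real.sqrt (∫ ω, (πb₁ ω - π₁ ω) ^ 2 ∂P) *
          Real.sqrt (∫ ω, (lamb₁ ω - lam₁ ω) ^ 2 ∂P)) +
        B * (Real.sqrt (∫ ω, (πb₁ ω - π₁ ω) ^ 2 ∂P) *
          Real.sqrt (∫ ω, (lamb₀ ω - lam₀ ω) ^ 2 ∂P)) := by ring
    rw [expand]
    linarith [c1, c2, d3, d4]
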